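/- arXiv:1704.08480 — 2 statements merged into one kernel-verified Lean document; each statement's English description precedes it below -/
import Mathlib

section
/- Consider the Potential Mechanism: given valuations v_i : 2^{M_i} → ℝ≥0, it outputs an allocation ALG maximizing Σ_i v_i(S_i) − P_C(S) over all allocations S, and charges player i the VCG payment p_i = [Σ_j v_j(ALG^{−i}_j) − P_C(ALG^{−i})] − [Σ_{j≠i} v_j(ALG_j) − P_C(ALG)], where ALG^{−i} maximizes the same objective subject to player i receiving ∅. Then p_i ≥ P_C(ALG) − P_C(ALG − ALG_i) for every i, and consequently Σ_i p_i ≥ C(ALG): the mechanism always covers the incurred cost. -/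
open Finset

variable {α : Type*}

noncomputable def potential [DecidableEq α] (n : ℕ)
    (C : Finset α → ℝ) (S : Fin n → Finset α) : ℝ :=
  ∑ I ∈ (univ : Finset (Fin n)).powerset.filter (· ≠ ∅),
    C (I.biUnion S) / ((I.card : ℝ) * (n.choose I.card : ℝ))

/-!
Player `i`'s payment dominates `P_C(ALG) - P_C(ALG - ALG_i)` because `ALG - ALG_i` is a feasible
allocation in the problem solved by `ALG^{-i}`. Summing over `i`, the potential telescopes: writing
`P_C(S) = Σ_I C(S_I) / (|I| binom(n,|I|))`, the coefficient of `C(S_J)` in `Σ_i [P_C(S) - P_C(S - S_i)]`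
is `1 / binom(n,|J|)` (from `J` itself) minus `1 / binom(n,|J|)` (from the `n - |J|` sets `J ∪ {i}`),
so only `J = univ` and `J = ∅` survive and the sum is `C(∪ S) - C(∅)`.
-/

theorem sum_sum_erase_eq_sum_card_compl_nsmul {ι M : Type*} [Fintype ι] [DecidableEq ι]
    [AddCommMonoid M] (g : Finset ι → M) :
    ∑ I : Finset ι, ∑ i ∈ I, g (I.erase i) = ∑ J : Finset ι, #Jᶜ • g J := by
  simp_rw [← sum_const, sum_sigma']
  refine sum_nbij' (fun x => ⟨x.1.erase x.2, x.2⟩) (fun x => ⟨insert x.2 x.1, x.2⟩)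
    ?_ ?_ ?_ ?_ fun _ _ => rfl
  all_goals rintro ⟨I, i⟩ h
  all_goals simp_all [insert_erase]

/-- Vanishes at `k = 0` (as `0⁻¹ = 0`), which lets sums over nonempty coalitions run over all. -/
noncomputable def potentialCoeff (n k : ℕ) : ℝ := ((k : ℝ) * n.choose k)⁻¹

theorem potential_eq_sum [DecidableEq α] (n : ℕ) (C : Finset α → ℝ) (S : Fin n → Finset α) :
    potential n C S = ∑ I : Finset (Fin n), potentialCoeff n #I * C (I.biUnion S) := by
  rw [potential, powerset_univ, sum_filter_of_ne]
  · simp only [potentialCoeff, div_eq_inv_mul]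
  · rintro I - hI rfl
    simp at hI

theorem card_mul_potentialCoeff {n : ℕ} (J : Finset (Fin n)) :
    #J * potentialCoeff n #J = (n.choose #J : ℝ)⁻¹ - if J = ∅ then 1 else 0 := by
  rcases eq_or_ne J ∅ with rfl | hJ
  · simp
  · have hcard : (#J : ℝ) ≠ 0 := by simpa [Finset.card_eq_zero] using hJ
    have hchoose : (n.choose #J : ℝ) ≠ 0 := by
      exact_mod_cast (Nat.choose_pos (by simpa using card_le_univ J)).ne'
    rw [potentialCoeff, if_neg hJ, sub_zero]
    field_simp

theorem card_compl_mul_potentialCoeff_succ {n : ℕ} (J : Finset (Fin n)) :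
    #Jᶜ * potentialCoeff n (#J + 1) = (n.choose #J : ℝ)⁻¹ - if J = univ then 1 else 0 := by
  rcases eq_or_ne J univ with rfl | hJ
  · simp
  · have hlt : #J < n := by simpa using (card_lt_iff_ne_univ J).2 hJ
    have hchoose : (n.choose #J : ℝ) ≠ 0 := by exact_mod_cast (Nat.choose_pos hlt.le).ne'
    have hsub : ((n - #J : ℕ) : ℝ) ≠ 0 := by exact_mod_cast (Nat.sub_pos_of_lt hlt).ne'
    have hpascal : ((#J : ℝ) + 1) * n.choose (#J + 1) = n.choose #J * (n - #J : ℕ) := by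
      rw [mul_comm]; exact_mod_cast Nat.choose_succ_right_eq n #J
    rw [card_compl, Fintype.card_fin, potentialCoeff, if_neg hJ, sub_zero]
    push_cast [hpascal]
    field_simp

theorem sum_sum_potentialCoeff_mul_sub_erase {n : ℕ} (f : Finset (Fin n) → ℝ) :
    ∑ i, ∑ I, potentialCoeff n #I * (f I - f (I.erase i)) = f univ - f ∅ := by
  calc ∑ i, ∑ I, potentialCoeff n #I * (f I - f (I.erase i))
      = ∑ I, ∑ i ∈ I, potentialCoeff n #I * (f I - f (I.erase i)) := by
        rw [sum_comm]
        refine sum_congr rfl fun I _ => (sum_subset (subset_univ I) fun i _ hi => ?_).symm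
        rw [erase_eq_of_notMem hi, sub_self, mul_zero]
    _ = ∑ I, #I * potentialCoeff n #I * f I
          - ∑ I, ∑ i ∈ I, potentialCoeff n (#(I.erase i) + 1) * f (I.erase i) := by
        simp_rw [mul_sub, sum_sub_distrib, sum_const, nsmul_eq_mul, mul_assoc]
        congr 1
        exact sum_congr rfl fun I _ => sum_congr rfl fun i hi => by rw [card_erase_add_one hi]
    _ = ∑ J, #J * potentialCoeff n #J * f J - ∑ J, #Jᶜ * potentialCoeff n (#J + 1) * f J := by
        rw [sum_sum_erase_eq_sum_card_compl_nsmul fun J => potentialCoeff n (#J + 1) * f J]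
        simp only [nsmul_eq_mul, mul_assoc]
    _ = f univ - f ∅ := by
        simp_rw [card_mul_potentialCoeff, card_compl_mul_potentialCoeff_succ, sub_mul,
          sum_sub_distrib, ite_mul, one_mul, zero_mul, sum_ite_eq', mem_univ, if_true]
        ring

theorem biUnion_update_empty [DecidableEq α] {ι : Type*} [DecidableEq ι] (S : ι → Finset α)
    (i : ι) (I : Finset ι) :
    I.biUnion (Function.update S i ∅) = (I.erase i).biUnion S := by
  ext x
  simp only [mem_biUnion, mem_erase, Function.update_apply]
  grind

theorem sum_potential_sub_potential_update [DecidableEq α] (n : ℕ) (C : Finset α → ℝ)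
    (S : Fin n → Finset α) :
    ∑ i, (potential n C S - potential n C (Function.update S i ∅)) = C (univ.biUnion S) - C ∅ := by
  simp_rw [potential_eq_sum, biUnion_update_empty, ← sum_sub_distrib, ← mul_sub]
  simpa using sum_sum_potentialCoeff_mul_sub_erase fun I => C (I.biUnion S)

theorem stmt10_general [DecidableEq α] (n : ℕ) (M : Fin n → Finset α)
    (C : Finset α → ℝ) (hC0 : C ∅ = 0)
    (v : Fin n → Finset α → ℝ) (hv0 : ∀ i, v i ∅ = 0)
    (ALG : Fin n → Finset α) (hALGsub : ∀ i, ALG i ⊆ M i)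
    (A : Fin n → Fin n → Finset α)
    (hAmax : ∀ i, ∀ S : Fin n → Finset α, (∀ j, S j ⊆ M j) → S i = ∅ →
      ∑ j, v j (S j) - potential n C S ≤ ∑ j, v j (A i j) - potential n C (A i))
    (p : Fin n → ℝ)
    (hp : ∀ i, p i = (∑ j, v j (A i j) - potential n C (A i)) -
      (∑ j ∈ univ.erase i, v j (ALG j) - potential n C ALG)) :
    (∀ i, potential n C ALG - potential n C (Function.update ALG i ∅) ≤ p i) ∧
      C (univ.biUnion ALG) ≤ ∑ i, p i := by
  have hcover : ∀ i, potential n C ALG - potential n C (Function.update ALG i ∅) ≤ p i := by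
    intro i
    have hfeasible : ∀ j, Function.update ALG i ∅ j ⊆ M j := fun j => by
      rcases eq_or_ne j i with rfl | hj
      · simp
      · simpa [hj] using hALGsub j
    have hvalue : ∑ j, v j (Function.update ALG i ∅ j) = ∑ j ∈ univ.erase i, v j (ALG j) := by
      rw [← add_sum_erase _ _ (mem_univ i), Function.update_self, hv0, zero_add]
      exact sum_congr rfl fun j hj => by rw [Function.update_of_ne (ne_of_mem_erase hj)]
    have hopt := hAmax i _ hfeasible (Function.update_self i ∅ ALG)
    rw [hp i]
    linarith
  refine ⟨hcover, ?_⟩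
  calc C (univ.biUnion ALG)
      = ∑ i, (potential n C ALG - potential n C (Function.update ALG i ∅)) := by
        rw [sum_potential_sub_potential_update, hC0, sub_zero]
    _ ≤ ∑ i, p i := sum_le_sum fun i _ => hcover i

theorem stmt10 [DecidableEq α] (n : ℕ) (M : Fin n → Finset α)
    (hM : ∀ i j : Fin n, i ≠ j → Disjoint (M i) (M j))
    (C : Finset α → ℝ) (hC0 : C ∅ = 0) (hCnn : ∀ S, 0 ≤ C S)
    (hCmono : ∀ S T : Finset α, S ⊆ T → C S ≤ C T)
    (v : Fin n → Finset α → ℝ) (hv0 : ∀ i, v i ∅ = 0)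
    (hvmono : ∀ i, ∀ S T : Finset α, S ⊆ T → T ⊆ M i → v i S ≤ v i T)
    (ALG : Fin n → Finset α) (hALGsub : ∀ i, ALG i ⊆ M i)
    (hALGmax : ∀ S : Fin n → Finset α, (∀ i, S i ⊆ M i) →
      ∑ i, v i (S i) - potential n C S ≤ ∑ i, v i (ALG i) - potential n C ALG)
    (A : Fin n → Fin n → Finset α) (hAsub : ∀ i j, A i j ⊆ M j)
    (hAii : ∀ i, A i i = ∅)
    (hAmax : ∀ i, ∀ S : Fin n → Finset α, (∀ j, S j ⊆ M j) → S i = ∅ →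
      ∑ j, v j (S j) - potential n C S ≤ ∑ j, v j (A i j) - potential n C (A i))
    (p : Fin n → ℝ)
    (hp : ∀ i, p i = (∑ j, v j (A i j) - potential n C (A i)) -
      (∑ j ∈ univ.erase i, v j (ALG j) - potential n C ALG)) :
    (∀ i, potential n C ALG - potential n C (Function.update ALG i ∅) ≤ p i) ∧
      C (univ.biUnion ALG) ≤ ∑ i, p i :=
  stmt10_general n M C hC0 v hv0 ALG hALGsub A hAmax p hp
end

section
/- Let C be a monotone normalized subadditive cost function and let ALG maximize Σ_i v_i(S_i) − P_C(S) over allocations S. Then the social cost π(S) = C(S) + Σ_i [v_i(M_i) − v_i(S_i)] satisfies π(ALG) ≤ 2·H_n · π(OPT) for every allocation OPT. -/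
/-!
Write `P_C(S) = ∑_{k=1}^n a_k / k`, where `a_k` is the average of `C(⋃_{i ∈ I} S_i)` over the
`k`-element sets `I` of players. Double counting pairs `I ⊆ K` shows that `k ↦ a_k` is monotone and
subadditive. Monotonicity gives `a_k ≤ a_n = C(S)`, hence `P_C(S) ≤ H_n C(S)`; covering all players
by `⌊n/k⌋ + 1` blocks of size at most `k` gives `k C(S) ≤ 2n a_k`, hence `C(S) ≤ 2 P_C(S)`.
With `L(S) = ∑_i (v_i(M_i) - v_i(S_i)) ≥ 0`, optimality of ALG against OPT gives
`C(ALG) + L(ALG) ≤ 2 P_C(OPT) + 2 L(OPT) - L(ALG) ≤ 2 H_n C(OPT) + 2 L(OPT)`, and `H_n ≥ 1`.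
-/

open Finset

variable {α : Type*}

section DoubleCounting

variable {ι β : Type*} [DecidableEq ι] [AddCommMonoid β]

theorem Finset.sum_powersetCard_sum_powersetCard (s : Finset ι) (g : Finset ι → β)
    {j m : ℕ} (hjm : j ≤ m) :
    ∑ K ∈ s.powersetCard m, ∑ I ∈ K.powersetCard j, g I =
      (#s - j).choose (m - j) • ∑ I ∈ s.powersetCard j, g I := by
  rw [sum_comm' (t' := s.powersetCard j) (s' := fun I => (s.powersetCard m).filter (I ⊆ ·))]
  · rw [smul_sum]
    refine sum_congr rfl fun I hI => ?_
    obtain ⟨hIs, hIj⟩ := mem_powersetCard.1 hI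
    rw [sum_const, card_filter_powersetCard_subset I s m hIs (hIj ▸ hjm), hIj]
  · intro K I
    simp only [mem_powersetCard, mem_filter]
    constructor
    · rintro ⟨⟨hKs, hKm⟩, hIK, hIj⟩
      exact ⟨⟨⟨hKs, hKm⟩, hIK⟩, hIK.trans hKs, hIj⟩
    · rintro ⟨⟨⟨hKs, hKm⟩, hIK⟩, -, hIj⟩
      exact ⟨⟨hKs, hKm⟩, hIK, hIj⟩

theorem Finset.sum_powersetCard_sdiff (g : Finset ι → β) {K : Finset ι} {j k : ℕ}
    (hK : #K = j + k) :
    ∑ I ∈ K.powersetCard j, g (K \ I) = ∑ J ∈ K.powersetCard k, g J := by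
  refine sum_nbij' (K \ ·) (K \ ·) ?_ ?_ ?_ ?_ fun _ _ => rfl
  · intro I hI
    simp only [mem_powersetCard] at hI ⊢
    exact ⟨sdiff_subset, by rw [card_sdiff_of_subset hI.1, hK, hI.2]; omega⟩
  · intro J hJ
    simp only [mem_powersetCard] at hJ ⊢
    exact ⟨sdiff_subset, by rw [card_sdiff_of_subset hJ.1, hK, hJ.2]; omega⟩
  · exact fun I hI => sdiff_sdiff_eq_self (mem_powersetCard.1 hI).1
  · exact fun J hJ => sdiff_sdiff_eq_self (mem_powersetCard.1 hJ).1

end DoubleCounting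

section SliceAverage

variable {ι : Type*} [Fintype ι] (f : Finset ι → ℝ)

noncomputable def sliceAverage (k : ℕ) : ℝ :=
  (∑ I ∈ powersetCard k univ, f I) / (Fintype.card ι).choose k

theorem sliceAverage_zero : sliceAverage f 0 = f ∅ := by
  simp [sliceAverage]

theorem sliceAverage_card : sliceAverage f (Fintype.card ι) = f univ := by
  rw [sliceAverage, ← card_univ, powersetCard_self, sum_singleton, Nat.choose_self,
    Nat.cast_one, div_one]

/-- The empty set drops out because its weight `1 / (0 * 1)` is `0` by the division convention. -/
theorem sum_powerset_div_card_mul_choose :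
    ∑ I ∈ univ.powerset, f I / (#I * (Fintype.card ι).choose #I) =
      ∑ k ∈ range (Fintype.card ι), sliceAverage f (k + 1) / (k + 1) := by
  calc ∑ I ∈ univ.powerset, f I / (#I * (Fintype.card ι).choose #I)
      = ∑ k ∈ range (Fintype.card ι + 1), sliceAverage f k / k := by
        rw [sum_powerset, card_univ]
        refine sum_congr rfl fun k _ => ?_
        rw [sliceAverage, div_div, sum_div, mul_comm]
        refine sum_congr rfl fun I hI => ?_
        rw [(mem_powersetCard.1 hI).2]
    _ = _ := by
        rw [sum_range_succ']
        push_cast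
        rw [div_zero, add_zero]

variable [DecidableEq ι]

theorem sliceAverage_eq_sum_sum_powersetCard {j m : ℕ} (hjm : j ≤ m)
    (hm : m ≤ Fintype.card ι) :
    sliceAverage f j = (∑ K ∈ powersetCard m univ, ∑ I ∈ K.powersetCard j, f I) /
      ((Fintype.card ι).choose m * m.choose j) := by
  have hpos : (0 : ℝ) < ((Fintype.card ι - j).choose (m - j) : ℕ) :=
    Nat.cast_pos.2 (Nat.choose_pos (by omega))
  rw [sum_powersetCard_sum_powersetCard _ _ hjm, card_univ, nsmul_eq_mul, ← Nat.cast_mul,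
    Nat.choose_mul hjm, Nat.cast_mul, mul_comm (((Fintype.card ι).choose j : ℕ) : ℝ),
    mul_div_mul_left _ _ hpos.ne', sliceAverage]

variable {f}

theorem sliceAverage_mono (hf : Monotone f) {j m : ℕ} (hjm : j ≤ m)
    (hm : m ≤ Fintype.card ι) : sliceAverage f j ≤ sliceAverage f m := by
  rw [sliceAverage_eq_sum_sum_powersetCard f hjm hm, mul_comm, ← div_div, sliceAverage]
  gcongr
  rw [div_le_iff₀ (Nat.cast_pos.2 (Nat.choose_pos hjm)), sum_mul]
  refine sum_le_sum fun K hK => ?_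
  calc ∑ I ∈ K.powersetCard j, f I ≤ ∑ I ∈ K.powersetCard j, f K :=
        sum_le_sum fun I hI => hf (mem_powersetCard.1 hI).1
    _ = f K * m.choose j := by
        rw [sum_const, card_powersetCard, (mem_powersetCard.1 hK).2, nsmul_eq_mul, mul_comm]

theorem sliceAverage_add_le (hf : ∀ I J, f (I ∪ J) ≤ f I + f J) {j k : ℕ}
    (hjk : j + k ≤ Fintype.card ι) :
    sliceAverage f (j + k) ≤ sliceAverage f j + sliceAverage f k := by
  rw [sliceAverage_eq_sum_sum_powersetCard f (Nat.le_add_right j k) hjk,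
    sliceAverage_eq_sum_sum_powersetCard f (Nat.le_add_left k j) hjk, ← Nat.choose_symm_add,
    ← add_div, ← sum_add_distrib, mul_comm, ← div_div, sliceAverage]
  gcongr
  rw [le_div_iff₀ (Nat.cast_pos.2 (Nat.choose_pos (Nat.le_add_right j k))), sum_mul]
  refine sum_le_sum fun K hK => ?_
  have hKcard := (mem_powersetCard.1 hK).2
  calc f K * (j + k).choose j = ∑ I ∈ K.powersetCard j, f K := by
        rw [sum_const, card_powersetCard, hKcard, nsmul_eq_mul, mul_comm]
    _ ≤ ∑ I ∈ K.powersetCard j, (f I + f (K \ I)) := sum_le_sum fun I hI => by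
        simpa [union_sdiff_of_subset (mem_powersetCard.1 hI).1] using hf I (K \ I)
    _ = _ := by rw [sum_add_distrib, sum_powersetCard_sdiff f hKcard]

theorem sliceAverage_nonneg (hf : Monotone f) (hf0 : f ∅ = 0) {k : ℕ}
    (hk : k ≤ Fintype.card ι) : 0 ≤ sliceAverage f k := by
  simpa [sliceAverage_zero, hf0] using sliceAverage_mono hf (Nat.zero_le k) hk

theorem sliceAverage_mul_le (hsub : ∀ I J, f (I ∪ J) ≤ f I + f J) (hf0 : f ∅ = 0)
    {q k : ℕ} (hqk : q * k ≤ Fintype.card ι) :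
    sliceAverage f (q * k) ≤ q * sliceAverage f k := by
  induction q with
  | zero => simp [sliceAverage_zero, hf0]
  | succ q ih =>
    rw [Nat.succ_mul] at hqk ⊢
    calc sliceAverage f (q * k + k) ≤ sliceAverage f (q * k) + sliceAverage f k :=
          sliceAverage_add_le hsub hqk
      _ ≤ q * sliceAverage f k + sliceAverage f k := by
          gcongr
          exact ih (by omega)
      _ = (q + 1 : ℕ) * sliceAverage f k := by push_cast; ring

/-- Cover `univ` by `⌊n / k⌋` blocks of size `k` and one block of size `n % k ≤ k`. -/
theorem le_div_add_one_mul_sliceAverage (hf : Monotone f)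
    (hsub : ∀ I J, f (I ∪ J) ≤ f I + f J) (hf0 : f ∅ = 0) {k : ℕ} (hk0 : 0 < k)
    (hk : k ≤ Fintype.card ι) :
    f univ ≤ (Fintype.card ι / k + 1 : ℕ) * sliceAverage f k := by
  set n := Fintype.card ι
  have hdiv : n / k * k + n % k = n := Nat.div_add_mod' n k
  have hmod : n % k ≤ k := (Nat.mod_lt n hk0).le
  calc f univ = sliceAverage f (n / k * k + n % k) := by rw [hdiv, sliceAverage_card]
    _ ≤ sliceAverage f (n / k * k) + sliceAverage f (n % k) :=
        sliceAverage_add_le hsub (by omega)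
    _ ≤ (n / k : ℕ) * sliceAverage f k + sliceAverage f k := by
        gcongr
        · exact sliceAverage_mul_le hsub hf0 (by omega)
        · exact sliceAverage_mono hf hmod hk
    _ = (n / k + 1 : ℕ) * sliceAverage f k := by push_cast; ring

theorem mul_le_two_mul_sliceAverage (hf : Monotone f)
    (hsub : ∀ I J, f (I ∪ J) ≤ f I + f J) (hf0 : f ∅ = 0) {k : ℕ} (hk0 : 0 < k)
    (hk : k ≤ Fintype.card ι) :
    k * f univ ≤ 2 * Fintype.card ι * sliceAverage f k := by
  set n := Fintype.card ι
  have hcover : ((n / k + 1 : ℕ) : ℝ) * k ≤ 2 * n := by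
    have := Nat.div_mul_le_self n k
    exact_mod_cast (by rw [Nat.succ_mul]; omega : (n / k + 1) * k ≤ 2 * n)
  calc (k : ℝ) * f univ ≤ k * ((n / k + 1 : ℕ) * sliceAverage f k) := by
        gcongr
        exact le_div_add_one_mul_sliceAverage hf hsub hf0 hk0 hk
    _ = ((n / k + 1 : ℕ) * k) * sliceAverage f k := by ring
    _ ≤ 2 * n * sliceAverage f k := by
        gcongr
        exact sliceAverage_nonneg hf hf0 hk

theorem sum_sliceAverage_div_le (hf : Monotone f) :
    ∑ k ∈ range (Fintype.card ι), sliceAverage f (k + 1) / (k + 1) ≤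
      (∑ k ∈ range (Fintype.card ι), (1 : ℝ) / (k + 1)) * f univ := by
  rw [sum_mul]
  refine sum_le_sum fun k hk => ?_
  have hle : sliceAverage f (k + 1) ≤ f univ := by
    rw [← sliceAverage_card f]
    exact sliceAverage_mono hf (mem_range.1 hk) le_rfl
  rw [one_div_mul_eq_div]
  gcongr

theorem le_two_mul_sum_sliceAverage_div (hf : Monotone f)
    (hsub : ∀ I J, f (I ∪ J) ≤ f I + f J) (hf0 : f ∅ = 0) :
    f univ ≤ 2 * ∑ k ∈ range (Fintype.card ι), sliceAverage f (k + 1) / (k + 1) := by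
  rcases (Fintype.card ι).eq_zero_or_pos with hn | hn
  · rw [← sliceAverage_card f, hn, sliceAverage_zero, hf0]
    simp
  set n := Fintype.card ι
  have hterm : ∀ k ∈ range n, f univ / (2 * n) ≤ sliceAverage f (k + 1) / (k + 1) := by
    intro k hk
    rw [div_le_div_iff₀ (by positivity) (by positivity)]
    simpa [mul_comm] using
      mul_le_two_mul_sliceAverage hf hsub hf0 k.succ_pos (mem_range.1 hk)
  calc f univ = 2 * (n * (f univ / (2 * n))) := by field_simp
    _ ≤ 2 * ∑ k ∈ range n, sliceAverage f (k + 1) / (k + 1) := by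
        gcongr
        simpa using sum_le_sum hterm

end SliceAverage

section Potential

variable [DecidableEq α] {n : ℕ} {C : Finset α → ℝ}

theorem potential_eq_sum_sliceAverage (S : Fin n → Finset α) :
    potential n C S =
      ∑ k ∈ range n, sliceAverage (fun I => C (I.biUnion S)) (k + 1) / (k + 1) := by
  rw [potential, sum_filter_of_ne fun I _ hI => ?_]
  · simpa using sum_powerset_div_card_mul_choose (fun I : Finset (Fin n) => C (I.biUnion S))
  · rintro rfl
    simp at hI

theorem Monotone.comp_biUnion (hC : Monotone C) (S : Fin n → Finset α) :
    Monotone fun I : Finset (Fin n) => C (I.biUnion S) :=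
  fun _ _ hIJ => hC (biUnion_subset_biUnion_of_subset_left S hIJ)

theorem potential_le_harmonic_mul (hC : Monotone C) (S : Fin n → Finset α) :
    potential n C S ≤ (∑ k ∈ range n, (1 : ℝ) / (k + 1)) * C (univ.biUnion S) := by
  simpa [potential_eq_sum_sliceAverage] using sum_sliceAverage_div_le (hC.comp_biUnion S)

theorem le_two_mul_potential (hC0 : C ∅ = 0) (hC : Monotone C)
    (hCsub : ∀ S T, C (S ∪ T) ≤ C S + C T) (S : Fin n → Finset α) :
    C (univ.biUnion S) ≤ 2 * potential n C S := by
  have hsub (I J : Finset (Fin n)) :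
      C ((I ∪ J).biUnion S) ≤ C (I.biUnion S) + C (J.biUnion S) := by
    rw [union_biUnion]
    exact hCsub _ _
  simpa [potential_eq_sum_sliceAverage] using
    le_two_mul_sum_sliceAverage_div (hC.comp_biUnion S) hsub (by simpa using hC0)

end Potential

theorem stmt12_general [DecidableEq α] (n : ℕ) (M : Fin n → Finset α)
    (C : Finset α → ℝ) (hC0 : C ∅ = 0)
    (hCmono : ∀ S T : Finset α, S ⊆ T → C S ≤ C T)
    (hsubadd : ∀ S T : Finset α, C (S ∪ T) ≤ C S + C T)
    (v : Fin n → Finset α → ℝ)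
    (hvmono : ∀ i, ∀ S T : Finset α, S ⊆ T → T ⊆ M i → v i S ≤ v i T)
    (ALG : Fin n → Finset α) (hALGsub : ∀ i, ALG i ⊆ M i)
    (hALGmax : ∀ S : Fin n → Finset α, (∀ i, S i ⊆ M i) →
      ∑ i, v i (S i) - potential n C S ≤ ∑ i, v i (ALG i) - potential n C ALG)
    (OPT : Fin n → Finset α) (hOPT : ∀ i, OPT i ⊆ M i) :
    C (univ.biUnion ALG) + ∑ i, (v i (M i) - v i (ALG i)) ≤
      2 * (∑ k ∈ Finset.range n, (1 : ℝ) / (k + 1)) *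
        (C (univ.biUnion OPT) + ∑ i, (v i (M i) - v i (OPT i))) := by
  obtain rfl | hn := n.eq_zero_or_pos
  · simp [hC0]
  have hC : Monotone C := fun S T h => hCmono S T h
  have hH : 1 ≤ ∑ k ∈ Finset.range n, (1 : ℝ) / (k + 1) := by
    simpa using single_le_sum (f := fun k : ℕ => (1 : ℝ) / (k + 1))
      (fun k _ => by positivity) (mem_range.2 hn)
  have hpotALG := le_two_mul_potential hC0 hC hsubadd ALG
  have hpotOPT := potential_le_harmonic_mul hC OPT
  have hvALG : ∑ i, v i (ALG i) ≤ ∑ i, v i (M i) :=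
    sum_le_sum fun i _ => hvmono i _ _ (hALGsub i) subset_rfl
  have hvOPT : ∑ i, v i (OPT i) ≤ ∑ i, v i (M i) :=
    sum_le_sum fun i _ => hvmono i _ _ (hOPT i) subset_rfl
  rw [sum_sub_distrib, sum_sub_distrib]
  linarith [hALGmax OPT hOPT, le_mul_of_one_le_left (sub_nonneg.2 hvOPT) hH]

theorem stmt12 [DecidableEq α] (n : ℕ) (M : Fin n → Finset α)
    (hM : ∀ i j : Fin n, i ≠ j → Disjoint (M i) (M j))
    (C : Finset α → ℝ) (hC0 : C ∅ = 0) (hCnn : ∀ S, 0 ≤ C S)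
    (hCmono : ∀ S T : Finset α, S ⊆ T → C S ≤ C T)
    (hsubadd : ∀ S T : Finset α, C (S ∪ T) ≤ C S + C T)
    (v : Fin n → Finset α → ℝ) (hv0 : ∀ i, v i ∅ = 0)
    (hvmono : ∀ i, ∀ S T : Finset α, S ⊆ T → T ⊆ M i → v i S ≤ v i T)
    (hvnn : ∀ i S, 0 ≤ v i S)
    (ALG : Fin n → Finset α) (hALGsub : ∀ i, ALG i ⊆ M i)
    (hALGmax : ∀ S : Fin n → Finset α, (∀ i, S i ⊆ M i) →
      ∑ i, v i (S i) - potential n C S ≤ ∑ i, v i (ALG i) - potential n C ALG)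
    (OPT : Fin n → Finset α) (hOPT : ∀ i, OPT i ⊆ M i) :
    C (univ.biUnion ALG) + ∑ i, (v i (M i) - v i (ALG i)) ≤
      2 * (∑ k ∈ Finset.range n, (1 : ℝ) / (k + 1)) *
        (C (univ.biUnion OPT) + ∑ i, (v i (M i) - v i (OPT i))) :=
  stmt12_general n M C hC0 hCmono hsubadd v hvmono ALG hALGsub hALGmax OPT hOPT
end
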